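/- Let 0 < β_L ≤ β_R, f the cumulant generating function and I(j) = sup_{λ∈ℝ}(λ j − f(λ)) its Legendre transform. Then I satisfies the Gallavotti–Cohen symmetry relation: I(j) = (β_L − β_R) j + I(−j) for every j ∈ ℝ. -/

import Mathlib

/-! The symmetry `f(λ) = f(β_L − β_R − λ)` comes from `F(λ, η) = F(β_L − β_R − λ, η)`, since
the reflection only swaps the two factors of `F`. It transfers to `f` because `F(λ, ·)` is
strictly decreasing on `[0, ∞)`, so that the root of `F(λ, ·) = 1` is unique. Reindexing the
supremum defining `I(j)` by `λ ↦ β_L − β_R − λ` then gives the Gallavotti–Cohen relation. -/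

open MeasureTheory

/-- `C(x,η) = ∫₀^∞ v e^{−η/v − x v²/2} dv`. -/
noncomputable def Ccal (x η : ℝ) : ℝ :=
  ∫ v in Set.Ioi (0 : ℝ), v * Real.exp (-η / v - x * v ^ 2 / 2)

/-- `F(λ,η) = β_L β_R C(β_R+λ, η) C(β_L−λ, η)`. -/
noncomputable def Fcal (βL βR lam η : ℝ) : ℝ :=
  βL * βR * Ccal (βR + lam) η * Ccal (βL - lam) η

/-- `f : ℝ → [0,∞]` is the cumulant generating function of the current:
`f(λ)` is the unique positive solution of `F(λ, f(λ)) = 1` on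
`(−β_R, β_L) ∖ [β_L−β_R, 0]`, `f ≡ 0` on the interval between `β_L−β_R` and `0`,
and `f ≡ +∞` outside `(−β_R, β_L)`. -/
def IsCGF (βL βR : ℝ) (f : ℝ → EReal) : Prop :=
  (∀ lam ∈ Set.uIcc (βL - βR) 0, f lam = 0) ∧
  (∀ lam ∈ Set.Ioo (-βR) βL \ Set.uIcc (βL - βR) 0,
      ∃ η : ℝ, 0 < η ∧ Fcal βL βR lam η = 1 ∧ f lam = (η : EReal)) ∧
  (∀ lam ∉ Set.Ioo (-βR) βL, f lam = ⊤)

/-- Legendre transform `I(j) = sup_λ (λ j − f(λ))`. -/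
noncomputable def legendre (f : ℝ → EReal) (j : ℝ) : EReal :=
  ⨆ lam : ℝ, ((lam * j : ℝ) : EReal) - f lam

open Set

lemma setIntegral_pos_of_forall_pos {X : Type*} [MeasurableSpace X] {μ : Measure X} {s : Set X}
    {g : X → ℝ} (hs : MeasurableSet s) (hμs : μ s ≠ 0) (hg : IntegrableOn g s μ)
    (hpos : ∀ x ∈ s, 0 < g x) : 0 < ∫ x in s, g x ∂μ := by
  rw [setIntegral_pos_iff_support_of_nonneg_ae
    (ae_restrict_of_forall_mem hs fun x hx => (hpos x hx).le) hg]
  have hsupp : Function.support g ∩ s = s :=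
    inter_eq_right.2 fun x hx => (hpos x hx).ne'
  rw [hsupp]
  exact pos_iff_ne_zero.2 hμs

lemma integrableOn_Ccal_integrand {x η : ℝ} (hx : 0 < x) (hη : 0 ≤ η) :
    IntegrableOn (fun v => v * Real.exp (-η / v - x * v ^ 2 / 2)) (Ioi 0) := by
  have hdom : Integrable (fun v : ℝ => v * Real.exp (-(x / 2) * v ^ 2)) :=
    integrable_mul_exp_neg_mul_sq (by linarith)
  have hcont : ContinuousOn (fun v => v * Real.exp (-η / v - x * v ^ 2 / 2)) (Ioi 0) :=
    continuousOn_id.mul <| Real.continuous_exp.comp_continuousOn <|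
      (continuousOn_const.div continuousOn_id fun v hv => ne_of_gt hv).sub (by fun_prop)
  refine hdom.integrableOn.mono' (hcont.aestronglyMeasurable measurableSet_Ioi) ?_
  filter_upwards [ae_restrict_mem measurableSet_Ioi] with v (hv : 0 < v)
  rw [Real.norm_eq_abs, abs_of_nonneg (by positivity)]
  have hηv : -η / v ≤ 0 := div_nonpos_of_nonpos_of_nonneg (by linarith) hv.le
  gcongr
  linarith

lemma Ccal_pos {x η : ℝ} (hx : 0 < x) (hη : 0 ≤ η) : 0 < Ccal x η :=
  setIntegral_pos_of_forall_pos measurableSet_Ioi (by simp) (integrableOn_Ccal_integrand hx hη)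
    fun v (hv : 0 < v) => by positivity

lemma Ccal_strictAntiOn {x : ℝ} (hx : 0 < x) : StrictAntiOn (Ccal x) (Ici 0) := by
  intro η (hη : 0 ≤ η) η' (hη' : 0 ≤ η') hlt
  have hi := integrableOn_Ccal_integrand hx hη
  have hi' := integrableOn_Ccal_integrand hx hη'
  have hdiff : 0 < Ccal x η - Ccal x η' := by
    rw [Ccal, Ccal, ← integral_sub hi hi']
    refine setIntegral_pos_of_forall_pos measurableSet_Ioi (by simp) (hi.sub hi') ?_
    intro v (hv : 0 < v)
    have hdiv : -η' / v < -η / v := div_lt_div_of_pos_right (by linarith) hv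
    have hexp : Real.exp (-η' / v - x * v ^ 2 / 2) < Real.exp (-η / v - x * v ^ 2 / 2) :=
      Real.exp_lt_exp.2 (by linarith)
    exact sub_pos.2 (mul_lt_mul_of_pos_left hexp hv)
  linarith

lemma Fcal_eq_one_injOn {βL βR lam : ℝ} (h₁ : 0 < βR + lam) (h₂ : 0 < βL - lam) {η η' : ℝ}
    (hη : 0 ≤ η) (hη' : 0 ≤ η') (hF : Fcal βL βR lam η = 1) (hF' : Fcal βL βR lam η' = 1) :
    η = η' := by
  have hprod : StrictAntiOn (fun η => Ccal (βR + lam) η * Ccal (βL - lam) η) (Ici 0) :=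
    fun a ha b hb hab => mul_lt_mul (Ccal_strictAntiOn h₁ ha hb hab)
      (Ccal_strictAntiOn h₂ ha hb hab).le (Ccal_pos h₂ hb) (Ccal_pos h₁ ha).le
  have hβ : βL * βR ≠ 0 := by
    rintro h
    simp [Fcal, h] at hF
  refine hprod.injOn hη hη' (mul_left_cancel₀ hβ ?_)
  rw [Fcal] at hF hF'
  linear_combination hF - hF'

lemma Fcal_reflect (βL βR lam η : ℝ) : Fcal βL βR (βL - βR - lam) η = Fcal βL βR lam η := by
  rw [Fcal, Fcal, show βR + (βL - βR - lam) = βL - lam by ring,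
    show βL - (βL - βR - lam) = βR + lam by ring]
  ring

lemma sub_mem_uIcc_zero_iff (c lam : ℝ) : c - lam ∈ uIcc c 0 ↔ lam ∈ uIcc c 0 := by
  simp only [mem_uIcc]
  constructor <;> rintro (⟨h₁, h₂⟩ | ⟨h₁, h₂⟩) <;> [left; right; left; right] <;>
    constructor <;> linarith

lemma sub_sub_mem_Ioo_iff (a b lam : ℝ) : a - b - lam ∈ Ioo (-b) a ↔ lam ∈ Ioo (-b) a := by
  simp only [mem_Ioo]
  constructor <;> rintro ⟨h₁, h₂⟩ <;> constructor <;> linarith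

theorem IsCGF.apply_reflect {βL βR : ℝ} {f : ℝ → EReal} (hf : IsCGF βL βR f) (lam : ℝ) :
    f (βL - βR - lam) = f lam := by
  obtain ⟨hzero, hroot, htop⟩ := hf
  have hU := sub_mem_uIcc_zero_iff (βL - βR) lam
  have hI := sub_sub_mem_Ioo_iff βL βR lam
  by_cases hlamU : lam ∈ uIcc (βL - βR) 0
  · rw [hzero _ hlamU, hzero _ (hU.2 hlamU)]
  by_cases hlamI : lam ∈ Ioo (-βR) βL
  · obtain ⟨η, hη, hFη, hfη⟩ := hroot lam ⟨hlamI, hlamU⟩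
    obtain ⟨η', hη', hFη', hfη'⟩ := hroot _ ⟨hI.2 hlamI, mt hU.1 hlamU⟩
    rw [Fcal_reflect] at hFη'
    have h₁ : 0 < βR + lam := by linarith [hlamI.1]
    have h₂ : 0 < βL - lam := by linarith [hlamI.2]
    rw [hfη, hfη', Fcal_eq_one_injOn h₁ h₂ hη'.le hη.le hFη' hFη]
  · rw [htop _ hlamI, htop _ (mt hI.1 hlamI)]

lemma EReal.coe_add_iSup {ι : Sort*} (c : ℝ) (g : ι → EReal) :
    (c : EReal) + ⨆ i, g i = ⨆ i, ((c : EReal) + g i) :=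
  Monotone.map_iSup_of_continuousAt (f := fun y => (c : EReal) + y)
    ((EReal.continuousAt_add (Or.inl (EReal.coe_ne_top c)) (Or.inl (EReal.coe_ne_bot c))).comp
      (Continuous.prodMk_right _).continuousAt)
    (fun _ _ h => add_le_add_right h _) (by simp)

theorem legendre_eq_of_apply_reflect {f : ℝ → EReal} {c : ℝ} (hf : ∀ lam, f (c - lam) = f lam)
    (j : ℝ) : legendre f j = ((c * j : ℝ) : EReal) + legendre f (-j) := by
  have hsurj : Function.Surjective (fun lam : ℝ => c - lam) := fun y => ⟨c - y, by ring⟩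
  calc legendre f j
      = ⨆ lam : ℝ, (((c - lam) * j : ℝ) : EReal) - f (c - lam) :=
        (hsurj.iSup_comp fun t => ((t * j : ℝ) : EReal) - f t).symm
    _ = ⨆ lam : ℝ, ((c * j : ℝ) : EReal) + (((lam * -j : ℝ) : EReal) - f lam) := by
        refine iSup_congr fun lam => ?_
        rw [hf, show (c - lam) * j = c * j + lam * -j by ring, EReal.coe_add, add_sub_assoc]
    _ = ((c * j : ℝ) : EReal) + legendre f (-j) := (EReal.coe_add_iSup _ _).symm

theorem legendre_cgf_gallavotti_cohen_general
    (βL βR : ℝ)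
    (f : ℝ → EReal) (hf : IsCGF βL βR f) :
    ∀ j : ℝ, legendre f j = (((βL - βR) * j : ℝ) : EReal) + legendre f (-j) :=
  legendre_eq_of_apply_reflect hf.apply_reflect

/-- Gallavotti–Cohen symmetry for the Legendre transform of the cumulant generating
function: `I(j) = (β_L − β_R) j + I(−j)` for all `j ∈ ℝ`. -/
theorem legendre_cgf_gallavotti_cohen
    (βL βR : ℝ) (hβL : 0 < βL) (hLR : βL ≤ βR)
    (f : ℝ → EReal) (hf : IsCGF βL βR f) :
    ∀ j : ℝ, legendre f j = (((βL - βR) * j : ℝ) : EReal) + legendre f (-j) :=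
  legendre_cgf_gallavotti_cohen_general βL βR f hf
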